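/- arXiv:1201.6637 — 3 statements merged into one kernel-verified Lean document; each statement's English description precedes it below -/
import Mathlib

section
/- Define a_k := ((-1)^k·4/(3·k!))·(B_{2k+2}/(2k+2) − B_{2k+4}/(2k+4)) for k ∈ ℕ, where B_n are Bernoulli numbers. Then the power series ∑_{k=0}^∞ a_k t^{k+2} has radius of convergence 0; i.e., for every t > 0 the series ∑_k a_k t^{k+2} diverges. -/
open Real

lemma bern_bound (n : ℕ) (hn : n ≠ 0) :
    (((2 * n).factorial : ℝ)) / (2 ^ (2 * n - 1) * π ^ (2 * n)) ≤
      (-1 : ℝ) ^ (n + 1) * (bernoulli (2 * n) : ℝ) := by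
  have hs := hasSum_zeta_nat hn
  have h1 : (1 : ℝ) ≤ (-1 : ℝ) ^ (n + 1) * (2 : ℝ) ^ (2 * n - 1) * π ^ (2 * n) *
      (bernoulli (2 * n) : ℝ) / ((2 * n).factorial : ℝ) := by
    have := le_hasSum hs 1 (fun j _ => by positivity)
    simpa using this
  have hfac : (0:ℝ) < ((2*n).factorial : ℝ) := by positivity
  have hp : (0:ℝ) < (2:ℝ) ^ (2*n-1) * π ^ (2*n) := by positivity
  rw [div_le_iff₀ hp]
  have h2 := (one_le_div hfac).mp h1
  nlinarith [h2]

/-- The coefficients `a_k = ((-1)^k·4/(3·k!))·(B_{2k+2}/(2k+2) − B_{2k+4}/(2k+4))` of the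
small-`t` heat-trace expansion on the 4-sphere give a power series `∑ a_k t^{k+2}` with
radius of convergence `0`: for every `t > 0` the series diverges. -/
theorem sphere_heat_coefficients_divergent (a : ℕ → ℝ)
    (ha : ∀ k : ℕ, a k = ((-1 : ℝ) ^ k * 4 / (3 * (k.factorial : ℝ))) *
      ((bernoulli (2 * k + 2) : ℝ) / (2 * k + 2) - (bernoulli (2 * k + 4) : ℝ) / (2 * k + 4))) :
    ∀ t : ℝ, 0 < t → ¬ Summable (fun k : ℕ => a k * t ^ (k + 2)) := by
  intro t ht hsum
  have hpi := Real.pi_pos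
  -- lower bound function
  set L : ℕ → ℝ := fun k => (t^2 / (6 * π^4)) * ((t / (4 * π^2)) * (k + 1)) ^ k with hL
  have hbound : ∀ k : ℕ, L k ≤ a k * t ^ (k + 2) := by
    intro k
    -- bounds on Bernoulli numbers
    have hX : (((2*(k+1)).factorial : ℝ)) / (2 ^ (2*(k+1) - 1) * π ^ (2*(k+1))) ≤
        (-1 : ℝ) ^ (k + 2) * (bernoulli (2*(k+1)) : ℝ) := bern_bound (k+1) (by omega)
    have hY : (((2*(k+2)).factorial : ℝ)) / (2 ^ (2*(k+2) - 1) * π ^ (2*(k+2))) ≤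
        (-1 : ℝ) ^ (k + 3) * (bernoulli (2*(k+2)) : ℝ) := bern_bound (k+2) (by omega)
    have e1 : 2*(k+1) = 2*k+2 := by ring
    have e2 : 2*(k+2) = 2*k+4 := by ring
    rw [e1] at hX; rw [e2] at hY
    have s1 : ((-1 : ℝ)) ^ (k + 2) = (-1 : ℝ) ^ k := by
      rw [pow_add]; ring
    have s2 : ((-1 : ℝ)) ^ (k + 3) = (-1 : ℝ) ^ (k+1) := by
      rw [pow_add, pow_add]; ring
    rw [s1] at hX; rw [s2] at hY
    set X : ℝ := (-1 : ℝ) ^ k * (bernoulli (2*k+2) : ℝ) with hXdef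
    set Y : ℝ := (-1 : ℝ) ^ (k+1) * (bernoulli (2*k+4) : ℝ) with hYdef
    have hXpos : 0 < X := lt_of_lt_of_le (by positivity) hX
    have hYlb : (((2*k+4).factorial : ℝ)) / (2 ^ (2*k+3) * π ^ (2*k+4)) ≤ Y := by
      have e3 : 2*k+4-1 = 2*k+3 := by omega
      rw [e3] at hY
      exact hY
    -- rewrite a k
    have hak : a k = (4 / (3 * (k.factorial : ℝ))) * (X / (2*k+2) + Y / (2*k+4)) := by
      rw [ha k, hXdef, hYdef]
      have : ((-1:ℝ)^(k+1)) = -((-1:ℝ)^k) := by rw [pow_succ]; ring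
      rw [this]
      push_cast
      ring
    have hkfac : (0:ℝ) < (k.factorial : ℝ) := by positivity
    have step1 : (4 / (3 * (k.factorial : ℝ))) *
        ((((2*k+4).factorial : ℝ)) / (2 ^ (2*k+3) * π ^ (2*k+4)) / (2*k+4)) ≤ a k := by
      rw [hak]
      have hx0 : (0:ℝ) ≤ X / (2*(k:ℝ)+2) := by positivity
      have hyy : (((2*k+4).factorial : ℝ)) / (2 ^ (2*k+3) * π ^ (2*k+4)) / (2*(k:ℝ)+4)
          ≤ Y / (2*(k:ℝ)+4) := by gcongr
      have hmul : (0:ℝ) ≤ 4 / (3 * (k.factorial : ℝ)) := by positivity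
      apply mul_le_mul_of_nonneg_left _ hmul
      push_cast
      push_cast at hyy hx0
      linarith
    -- factorial inequality: k! * (k+1)^(k+3) ≤ (2k+3)!
    have hfacineq : (k.factorial : ℝ) * ((k:ℝ)+1) ^ (k+3) ≤ ((2*k+3).factorial : ℝ) := by
      have h0 : k.factorial * (k+1)^(k+3) ≤ (k+(k+3)).factorial :=
        Nat.factorial_mul_pow_le_factorial
      have e : k + (k+3) = 2*k+3 := by omega
      rw [e] at h0
      exact_mod_cast h0
    have hfac24 : ((2*k+4).factorial : ℝ) = (2*(k:ℝ)+4) * ((2*k+3).factorial : ℝ) := by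
      have : (2*k+4).factorial = (2*k+4) * (2*k+3).factorial := by
        rw [show 2*k+4 = (2*k+3)+1 by omega, Nat.factorial_succ]
      rw [this]; push_cast; ring
    -- now chain
    have step2 : L k ≤ (4 / (3 * (k.factorial : ℝ))) *
        ((((2*k+4).factorial : ℝ)) / (2 ^ (2*k+3) * π ^ (2*k+4)) / (2*k+4)) * t ^ (k+2) := by
      simp only [hL]
      have hRHSeq : (4 / (3 * (k.factorial : ℝ))) *
          ((((2*k+4).factorial : ℝ)) / (2 ^ (2*k+3) * π ^ (2*k+4)) / (2*k+4)) * t ^ (k+2)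
          = (t^2 / (6 * π^4)) * (((2*k+3).factorial : ℝ) / (k.factorial : ℝ)) *
            ((t / (4 * π^2))) ^ k := by
        rw [hfac24]
        have hpow2 : (2:ℝ) ^ (2*k+3) = 8 * 4^k := by
          rw [pow_add, pow_mul]; norm_num [mul_comm]
        have hpowpi : π ^ (2*k+4) = π^4 * (π^2)^k := by
          rw [pow_add, pow_mul]; ring
        have hpowt : t ^ (k+2) = t^2 * t^k := by rw [pow_add]; ring
        rw [hpow2, hpowpi, hpowt, div_pow]
        have h4 : ((4:ℝ) * π^2)^k = 4^k * (π^2)^k := by rw [mul_pow]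
        rw [h4]
        field_simp
        ring
      rw [hRHSeq]
      have hstep : ((t / (4 * π^2)) * ((k:ℝ) + 1)) ^ k
          = (t / (4 * π^2)) ^ k * ((k:ℝ)+1) ^ k := by rw [mul_pow]
      rw [hstep]
      have hkk : ((k:ℝ)+1)^k ≤ ((2*k+3).factorial : ℝ) / (k.factorial : ℝ) := by
        rw [le_div_iff₀ hkfac]
        have hp1 : ((k:ℝ)+1)^k ≤ ((k:ℝ)+1)^(k+3) := by
          apply pow_le_pow_right₀
          · linarith [Nat.cast_nonneg (α := ℝ) k]
          · omega
        nlinarith [hfacineq, hkfac.le, pow_nonneg (show (0:ℝ) ≤ (k:ℝ)+1 by positivity) k]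
      calc (t^2 / (6 * π^4)) * ((t / (4 * π^2)) ^ k * ((k:ℝ)+1) ^ k)
          ≤ (t^2 / (6 * π^4)) * ((t / (4 * π^2)) ^ k * (((2*k+3).factorial : ℝ) / (k.factorial : ℝ))) := by
            gcongr
          _ = (t^2 / (6 * π^4)) * (((2*k+3).factorial : ℝ) / (k.factorial : ℝ)) * (t / (4 * π^2)) ^ k := by
            ring
    calc L k ≤ _ := step2
      _ ≤ a k * t ^ (k+2) := mul_le_mul_of_nonneg_right step1 (by positivity)
  -- L tends to infinity
  have hLtop : Filter.Tendsto L Filter.atTop Filter.atTop := by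
    have hC : (0:ℝ) < t^2 / (6 * π^4) := by positivity
    have hq : (0:ℝ) < t / (4 * π^2) := by positivity
    -- eventually (t/(4π²))*(k+1) ≥ 2
    obtain ⟨N, hN⟩ := exists_nat_ge (2 / (t / (4 * π^2)))
    have hev : ∀ k : ℕ, N ≤ k → (t^2 / (6 * π^4)) * 2^k ≤ L k := by
      intro k hk
      simp only [hL]
      have h2le : (2:ℝ) ≤ (t / (4 * π^2)) * ((k:ℝ)+1) := by
        rw [div_le_iff₀ hq] at hN
        have : (N:ℝ) ≤ (k:ℝ)+1 := by exact_mod_cast Nat.le_succ_of_le hk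
        nlinarith
      have h2k : (2:ℝ)^k ≤ ((t / (4 * π^2)) * ((k:ℝ)+1))^k :=
        pow_le_pow_left₀ (by norm_num) h2le k
      exact mul_le_mul_of_nonneg_left h2k (by positivity)
    apply Filter.tendsto_atTop_mono' Filter.atTop (Filter.eventually_atTop.mpr ⟨N, hev⟩)
    exact Filter.Tendsto.const_mul_atTop hC (tendsto_pow_atTop_atTop_of_one_lt one_lt_two)
  -- contradiction with summability
  have hzero := hsum.tendsto_atTop_zero
  have h1 : ∀ᶠ k in Filter.atTop, (1:ℝ) ≤ a k * t ^ (k+2) := by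
    filter_upwards [hLtop.eventually_ge_atTop 1] with k hk
    exact hk.trans (hbound k)
  have h2 : ∀ᶠ k in Filter.atTop, a k * t ^ (k+2) < 1 := by
    have := hzero.eventually (gt_mem_nhds (show (0:ℝ) < 1 by norm_num))
    filter_upwards [this] with k hk using hk
  obtain ⟨k, hk1, hk2⟩ := (h1.and h2).exists
  linarith
end

section
/- For z > 0, the Taylor expansion h(z) = ∑_{n=0}^∞ ((-1)^n n!/(2n+1)!) z^n holds, where h(z) := ∫_0^1 e^{-α(1-α)z} dα, and this series converges for all z ∈ ℂ. -/
open Real MeasureTheory Nat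

/-!
Expand `exp (-α(1-α)z)` in its power series and integrate term by term over `[0, 1]`, which
dominated convergence allows because the integrand is bounded there. The `n`-th term is
`(-z)ⁿ/n!` times the Beta integral `B(n+1, n+1) = (n!)²/(2n+1)!`. Since `n!/(2n+1)! ≤ 1/n!`,
the resulting series is dominated by the exponential series, hence converges on all of `ℂ`.
-/

theorem integral_pow_mul_one_sub_pow (m n : ℕ) :
    ∫ x in (0:ℝ)..1, x ^ m * (1 - x) ^ n = (m ! * n ! : ℝ) / (m + n + 1)! := by
  have hm : 0 < ((m : ℂ) + 1).re := by simp; positivity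
  have hn : 0 < ((n : ℂ) + 1).re := by simp; positivity
  have hbeta := Complex.betaIntegral_eq_Gamma_mul_div _ _ hm hn
  rw [show (m : ℂ) + 1 + (n + 1) = ((m + n + 1 : ℕ) : ℂ) + 1 by push_cast; ring,
    Complex.Gamma_nat_eq_factorial, Complex.Gamma_nat_eq_factorial,
    Complex.Gamma_nat_eq_factorial] at hbeta
  rw [← Complex.ofReal_inj, ← intervalIntegral.integral_ofReal]
  push_cast
  rw [← hbeta, Complex.betaIntegral]
  exact intervalIntegral.integral_congr fun x _ => by simp [Complex.cpow_natCast]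

theorem factorial_div_factorial_two_mul_add_one_le (n : ℕ) :
    (n ! : ℝ) / (2 * n + 1)! ≤ 1 / n ! := by
  rw [div_le_div_iff₀ (by positivity) (by positivity), one_mul]
  have hsq : n ! * n ! ≤ (2 * n + 1)! :=
    calc n ! * n ! ≤ (n + n)! :=
          le_of_dvd (factorial_pos _) (factorial_mul_factorial_dvd_factorial_add n n)
      _ ≤ (2 * n + 1)! := factorial_le (by omega)
  exact_mod_cast hsq

theorem hasSum_intervalIntegral_pow_div_factorial {f : ℝ → ℝ} {a b : ℝ}
    (hf : ContinuousOn f (Set.uIcc a b)) :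
    HasSum (fun n => ∫ x in a..b, f x ^ n / n !) (∫ x in a..b, exp (f x)) := by
  obtain ⟨M, hM⟩ := isCompact_uIcc.exists_bound_of_continuousOn hf
  have hIoc : Set.uIoc a b ⊆ Set.uIcc a b := Set.uIoc_subset_uIcc
  refine intervalIntegral.hasSum_integral_of_dominated_convergence (fun n _ => M ^ n / n !)
    (fun n => ((hf.pow n).div_const _).mono hIoc |>.aestronglyMeasurable measurableSet_uIoc)
    (fun n => ae_of_all _ fun x hx => ?_) (ae_of_all _ fun _ _ => summable_pow_div_factorial M)
    intervalIntegrable_const (ae_of_all _ fun x _ => ?_)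
  · rw [norm_div, norm_pow, RCLike.norm_natCast]
    gcongr
    exact hM x (hIoc hx)
  · rw [exp_eq_exp_ℝ]
    exact NormedSpace.expSeries_div_hasSum_exp (f x)

theorem intervalIntegral_neg_mul_one_sub_mul_pow_div_factorial (z : ℝ) (n : ℕ) :
    ∫ α in (0:ℝ)..1, (-α * (1 - α) * z) ^ n / n !
      = (-1) ^ n * n ! / (2 * n + 1)! * z ^ n := by
  have hterm : ∀ α : ℝ,
      (-α * (1 - α) * z) ^ n / n ! = (-z) ^ n / n ! * (α ^ n * (1 - α) ^ n) :=
    fun α => by rw [show -α * (1 - α) * z = -z * (α * (1 - α)) by ring, mul_pow, mul_pow]; ring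
  simp_rw [hterm, intervalIntegral.integral_const_mul, integral_pow_mul_one_sub_pow, ← two_mul]
  field_simp
  ring

theorem summable_neg_one_pow_mul_factorial_div_factorial_mul_pow (z : ℂ) :
    Summable fun n : ℕ => (-1) ^ n * (n ! : ℂ) / (2 * n + 1)! * z ^ n := by
  refine .of_norm_bounded (summable_pow_div_factorial ‖z‖) fun n => ?_
  simp only [norm_mul, norm_div, norm_pow, norm_neg, norm_one, one_pow, one_mul,
    Complex.norm_natCast]
  calc (n ! : ℝ) / (2 * n + 1)! * ‖z‖ ^ n ≤ 1 / n ! * ‖z‖ ^ n :=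
        mul_le_mul_of_nonneg_right (factorial_div_factorial_two_mul_add_one_le n) (by positivity)
    _ = ‖z‖ ^ n / n ! := by ring

/-- Taylor expansion of the form-factor: for `z > 0`,
`∫_0^1 e^{-α(1-α)z} dα = ∑_{n=0}^∞ ((-1)^n n!/(2n+1)!) z^n`, and the series
`∑_n ((-1)^n n!/(2n+1)!) z^n` converges for every `z ∈ ℂ`. -/
theorem BV_form_factor_taylor :
    (∀ z : ℝ, 0 < z →
      HasSum (fun n : ℕ => ((-1 : ℝ) ^ n * (n.factorial : ℝ) / ((2 * n + 1).factorial : ℝ)) * z ^ n)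
        (∫ α in (0:ℝ)..1, Real.exp (-α * (1 - α) * z))) ∧
    (∀ z : ℂ, Summable
      (fun n : ℕ => ((-1 : ℂ) ^ n * (n.factorial : ℂ) / ((2 * n + 1).factorial : ℂ)) * z ^ n)) := by
  refine ⟨fun z _ => ?_, summable_neg_one_pow_mul_factorial_div_factorial_mul_pow⟩
  simpa only [intervalIntegral_neg_mul_one_sub_mul_pow_div_factorial] using
    hasSum_intervalIntegral_pow_div_factorial (a := 0) (b := 1)
      (f := fun α => -α * (1 - α) * z) (by fun_prop)
end

section
/- For p ∈ ℤ, p ≠ 0, define v(p,t) := (t²/(4π)) ∫_0^1 ∑_{q∈ℤ} e^{-(q² + 2(1-ξ)pq + (1-ξ)p²)t} dξ. Then (2π p²/t)·v(p,t) → 1 as t → ∞; i.e., v(p,t) ≃ t/(2π p²) up to exponentially small corrections. -/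
/-!
Writing the exponent as `ξ q² + (1 - ξ) (q + p)²`, the modes `q = 0` and `q = -p` contribute
`e^{-(1-ξ) p² t} + e^{-ξ p² t}`, whose integral over `[0, 1]` is `2 (1 - e^{-p² t}) / (p² t)`;
after scaling by `(2π p² / t) · t² / (4π) = p² t / 2` this is exactly `1 - e^{-p² t}`.
For every other mode both `q²` and `(q + p)²` are at least `1`, hence so is the exponent, and for
`t ≥ 1` the term is at most `e^{1-t} (e^{-q²} + e^{-(q+p)²})`. The rest of the sum is therefore
`O(e^{-t})` uniformly in `ξ`, and still tends to `0` after multiplication by `p² t / 2`.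
-/

open Real Filter MeasureTheory Set Topology

lemma summable_exp_neg_mul_int_sq {c : ℝ} (hc : 0 < c) :
    Summable fun q : ℤ => exp (-(c * (q : ℝ) ^ 2)) := by
  have hnat : Summable fun n : ℕ => exp (-(c * (n : ℝ) ^ 2)) := by
    refine .of_nonneg_of_le (fun n => (exp_pos _).le) (fun n => ?_)
      (summable_exp_nat_mul_iff.mpr (neg_lt_zero.mpr hc))
    have : (n : ℝ) ≤ (n : ℝ) ^ 2 := by exact_mod_cast Nat.le_self_pow two_ne_zero n
    rw [exp_le_exp]
    nlinarith
  exact .of_nat_of_neg (by simpa using hnat) (by simpa using hnat)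

lemma summable_exp_neg_mul_int_add_sq {c : ℝ} (hc : 0 < c) (p : ℤ) :
    Summable fun q : ℤ => exp (-(c * ((q : ℝ) + p) ^ 2)) := by
  simpa [Function.comp_def] using
    (Equiv.addRight p).summable_iff.mpr (summable_exp_neg_mul_int_sq hc)

lemma exp_neg_combo_le {a b ξ : ℝ} (hξ : ξ ∈ Icc (0 : ℝ) 1) :
    exp (-(ξ * a + (1 - ξ) * b)) ≤ exp (-a) + exp (-b) := by
  have hmin : min a b ≤ ξ * a + (1 - ξ) * b :=
    Convex.min_le_combo a b hξ.1 (sub_nonneg.mpr hξ.2) (add_sub_cancel ξ 1)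
  rcases min_choice a b with h | h <;> rw [h] at hmin
  · linarith [exp_le_exp.mpr (neg_le_neg hmin), exp_pos (-b)]
  · linarith [exp_le_exp.mpr (neg_le_neg hmin), exp_pos (-a)]

lemma exp_neg_mul_le_exp_one_sub_mul {t x : ℝ} (ht : 1 ≤ t) (hx : 1 ≤ x) :
    exp (-(t * x)) ≤ exp (1 - t) * exp (-x) := by
  rw [← exp_add, exp_le_exp]
  nlinarith

lemma integral_exp_neg_mul_zero_one {c : ℝ} (hc : c ≠ 0) :
    ∫ ξ in (0 : ℝ)..1, exp (-(c * ξ)) = (1 - exp (-c)) / c := by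
  simp only [← neg_mul]
  rw [intervalIntegral.integral_comp_mul_left exp (neg_ne_zero.mpr hc), integral_exp]
  simp only [mul_zero, mul_one, exp_zero, smul_eq_mul]
  field_simp
  ring

lemma Summable.tsum_eq_sum_add_tsum_indicator_compl {α β : Type*} [UniformSpace α]
    [AddCommGroup α] [IsUniformAddGroup α] [CompleteSpace α] [T2Space α] {f : β → α}
    (hf : Summable f) (s : Finset β) :
    ∑' x, f x = ∑ x ∈ s, f x + ∑' x, (↑s : Set β)ᶜ.indicator f x := by
  rw [← hf.sum_add_tsum_subtype_compl s, ← tsum_subtype]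
  rfl

namespace FormFactor

noncomputable def term (p : ℤ) (t ξ : ℝ) (q : ℤ) : ℝ :=
  exp (-((q : ℝ) ^ 2 + 2 * (1 - ξ) * (p : ℝ) * q + (1 - ξ) * (p : ℝ) ^ 2) * t)

noncomputable def remainder (p : ℤ) (t ξ : ℝ) : ℝ :=
  ∑' q, ({0, -p} : Set ℤ)ᶜ.indicator (term p t ξ) q

variable (p : ℤ) {t ξ : ℝ}

lemma term_eq (q : ℤ) :
    term p t ξ q = exp (-(t * (ξ * (q : ℝ) ^ 2 + (1 - ξ) * ((q : ℝ) + p) ^ 2))) := by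
  rw [term]; ring_nf

lemma term_zero : term p t ξ 0 = exp (-(p ^ 2 * t * (1 - ξ))) := by
  rw [term]; ring_nf

lemma term_neg_self : term p t ξ (-p) = exp (-(p ^ 2 * t * ξ)) := by
  rw [term]; push_cast; ring_nf

lemma term_pos (q : ℤ) : 0 < term p t ξ q := exp_pos _

lemma term_le (hξ : ξ ∈ Icc (0 : ℝ) 1) (q : ℤ) :
    term p t ξ q ≤ exp (-(t * (q : ℝ) ^ 2)) + exp (-(t * ((q : ℝ) + p) ^ 2)) := by
  rw [term_eq]
  convert exp_neg_combo_le hξ using 3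
  ring

lemma summable_term (ht : 0 < t) (hξ : ξ ∈ Icc (0 : ℝ) 1) : Summable (term p t ξ) :=
  .of_nonneg_of_le (fun q => (term_pos p q).le) (term_le p hξ)
    ((summable_exp_neg_mul_int_sq ht).add (summable_exp_neg_mul_int_add_sq ht p))

lemma term_le_exp_one_sub (ht : 1 ≤ t) (hξ : ξ ∈ Icc (0 : ℝ) 1) {q : ℤ}
    (hq : q ∈ ({0, -p} : Set ℤ)ᶜ) :
    term p t ξ q ≤ exp (1 - t) * (exp (-(q : ℝ) ^ 2) + exp (-((q : ℝ) + p) ^ 2)) := by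
  simp only [mem_compl_iff, mem_insert_iff, mem_singleton_iff, not_or] at hq
  have one_le_sq {n : ℤ} (hn : n ≠ 0) : (1 : ℝ) ≤ (n : ℝ) ^ 2 :=
    (one_le_sq_iff_one_le_abs _).mpr (by exact_mod_cast Int.one_le_abs hn)
  have hq₁ : (1 : ℝ) ≤ (q : ℝ) ^ 2 := one_le_sq hq.1
  have hq₂ : (1 : ℝ) ≤ ((q : ℝ) + p) ^ 2 := by
    exact_mod_cast one_le_sq (n := q + p) (by omega)
  have hE : 1 ≤ ξ * (q : ℝ) ^ 2 + (1 - ξ) * ((q : ℝ) + p) ^ 2 :=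
    (le_min hq₁ hq₂).trans
      (Convex.min_le_combo _ _ hξ.1 (sub_nonneg.mpr hξ.2) (add_sub_cancel ξ 1))
  rw [term_eq]
  exact (exp_neg_mul_le_exp_one_sub_mul ht hE).trans
    (mul_le_mul_of_nonneg_left (exp_neg_combo_le hξ) (exp_pos _).le)

lemma tsum_term_eq (hp : p ≠ 0) (ht : 0 < t) (hξ : ξ ∈ Icc (0 : ℝ) 1) :
    ∑' q, term p t ξ q =
      exp (-(p ^ 2 * t * (1 - ξ))) + exp (-(p ^ 2 * t * ξ)) + remainder p t ξ := by
  rw [(summable_term p ht hξ).tsum_eq_sum_add_tsum_indicator_compl {0, -p},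
    Finset.sum_pair (by omega), Finset.coe_pair, term_zero, term_neg_self, remainder]

lemma remainder_nonneg : 0 ≤ remainder p t ξ :=
  tsum_nonneg fun _ => indicator_nonneg (fun q _ => (term_pos p q).le) _

lemma remainder_le (ht : 1 ≤ t) (hξ : ξ ∈ Icc (0 : ℝ) 1) :
    remainder p t ξ ≤
      exp (1 - t) * ∑' q : ℤ, (exp (-(q : ℝ) ^ 2) + exp (-((q : ℝ) + p) ^ 2)) := by
  have hK : Summable fun q : ℤ => exp (-(q : ℝ) ^ 2) + exp (-((q : ℝ) + p) ^ 2) := by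
    simpa using
      (summable_exp_neg_mul_int_sq one_pos).add (summable_exp_neg_mul_int_add_sq one_pos p)
  rw [remainder, ← tsum_mul_left]
  refine Summable.tsum_le_tsum (fun q => ?_) ((summable_term p (by linarith) hξ).indicator _)
    (hK.mul_left _)
  by_cases hq : q ∈ ({0, -p} : Set ℤ)ᶜ
  · rw [indicator_of_mem hq]
    exact term_le_exp_one_sub p ht hξ hq
  · rw [indicator_of_notMem hq]
    positivity

lemma continuousOn_remainder (ht : 0 < t) : ContinuousOn (remainder p t) (Icc 0 1) := by
  refine continuousOn_tsum (fun q => ?_)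
    ((summable_exp_neg_mul_int_sq ht).add (summable_exp_neg_mul_int_add_sq ht p)) fun q ξ hξ => ?_
  · by_cases hq : q ∈ ({0, -p} : Set ℤ)ᶜ
    · simp only [indicator_of_mem hq, term]
      fun_prop
    · simp only [indicator_of_notMem hq]
      exact continuousOn_const
  · rw [norm_of_nonneg (indicator_nonneg (fun q _ => (term_pos p q).le) _)]
    exact (indicator_le_self' (fun q _ => (term_pos p q).le) q).trans (term_le p hξ q)

lemma integral_tsum_term (hp : p ≠ 0) (ht : 0 < t) :
    ∫ ξ in (0 : ℝ)..1, ∑' q, term p t ξ q =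
      2 * ((1 - exp (-(p ^ 2 * t))) / (p ^ 2 * t)) + ∫ ξ in (0 : ℝ)..1, remainder p t ξ := by
  have hc : (p : ℝ) ^ 2 * t ≠ 0 := by positivity
  have hexp (f : ℝ → ℝ) (hf : Continuous f) :
      IntervalIntegrable (fun ξ => exp (f ξ)) volume 0 1 :=
    (continuous_exp.comp hf).intervalIntegrable 0 1
  have hR : IntervalIntegrable (remainder p t) volume 0 1 :=
    (continuousOn_remainder p ht).intervalIntegrable_of_Icc zero_le_one
  rw [intervalIntegral.integral_congr fun ξ hξ =>
      tsum_term_eq p hp ht (by rwa [uIcc_of_le zero_le_one] at hξ),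
    intervalIntegral.integral_add ((hexp _ (by fun_prop)).add (hexp _ (by fun_prop))) hR,
    intervalIntegral.integral_add (hexp _ (by fun_prop)) (hexp _ (by fun_prop)),
    intervalIntegral.integral_comp_sub_left (fun ξ => exp (-(p ^ 2 * t * ξ))),
    sub_self, sub_zero, integral_exp_neg_mul_zero_one hc]
  ring

lemma tendsto_mul_integral_remainder :
    Tendsto (fun t => t * ∫ ξ in (0 : ℝ)..1, remainder p t ξ) atTop (𝓝 0) := by
  set K := ∑' q : ℤ, (exp (-(q : ℝ) ^ 2) + exp (-((q : ℝ) + p) ^ 2))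
  have hbound : Tendsto (fun t => exp 1 * K * (t ^ 1 * exp (-t))) atTop (𝓝 0) := by
    simpa using (tendsto_pow_mul_exp_neg_atTop_nhds_zero 1).const_mul (exp 1 * K)
  refine tendsto_of_tendsto_of_tendsto_of_le_of_le' tendsto_const_nhds hbound ?_ ?_
  · filter_upwards [eventually_ge_atTop 0] with t ht
    exact mul_nonneg ht (intervalIntegral.integral_nonneg zero_le_one fun _ _ => remainder_nonneg p)
  · filter_upwards [eventually_ge_atTop 1] with t ht
    have hint : ∫ ξ in (0 : ℝ)..1, remainder p t ξ ≤ exp (1 - t) * K := by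
      simpa using intervalIntegral.integral_mono_on zero_le_one
        ((continuousOn_remainder p (by linarith)).intervalIntegrable_of_Icc zero_le_one)
        (intervalIntegrable_const (μ := volume)) fun ξ hξ => remainder_le p ht hξ
    calc t * ∫ ξ in (0 : ℝ)..1, remainder p t ξ ≤ t * (exp (1 - t) * K) := by gcongr
      _ = exp 1 * K * (t ^ 1 * exp (-t)) := by rw [sub_eq_add_neg, exp_add]; ring

end FormFactor

/-- Large-`t` asymptotics of the second-order form-factor on the circle: for `p ≠ 0`,
with `v(p,t) = (t²/(4π)) ∫_0^1 ∑_{q∈ℤ} e^{-(q²+2(1-ξ)pq+(1-ξ)p²)t} dξ`, one has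
`(2π p²/t)·v(p,t) → 1` as `t → ∞`. -/
theorem form_factor_large_t (p : ℤ) (hp : p ≠ 0) (v : ℤ → ℝ → ℝ)
    (hv : ∀ t : ℝ, 0 < t → v p t = (t ^ 2 / (4 * π)) *
      ∫ ξ in (0:ℝ)..1, ∑' q : ℤ,
        Real.exp (-((q : ℝ) ^ 2 + 2 * (1 - ξ) * (p : ℝ) * q + (1 - ξ) * (p : ℝ) ^ 2) * t)) :
    Tendsto (fun t : ℝ => (2 * π * (p : ℝ) ^ 2 / t) * v p t) atTop (nhds 1) := by
  have hP : (0 : ℝ) < (p : ℝ) ^ 2 := by positivity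
  have hexact : ∀ᶠ t in atTop, (2 * π * (p : ℝ) ^ 2 / t) * v p t =
      (1 - exp (-(p ^ 2 * t))) +
        p ^ 2 / 2 * (t * ∫ ξ in (0 : ℝ)..1, FormFactor.remainder p t ξ) := by
    filter_upwards [eventually_gt_atTop 0] with t ht
    have hv' : v p t = t ^ 2 / (4 * π) * ∫ ξ in (0 : ℝ)..1, ∑' q, FormFactor.term p t ξ q :=
      hv t ht
    rw [hv', FormFactor.integral_tsum_term p hp ht]
    field_simp
    ring
  rw [tendsto_congr' hexact]
  have hexp : Tendsto (fun t => exp (-(p ^ 2 * t))) atTop (𝓝 0) :=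
    tendsto_exp_neg_atTop_nhds_zero.comp (tendsto_id.const_mul_atTop hP)
  simpa using (tendsto_const_nhds (x := (1 : ℝ))).sub hexp |>.add
    ((FormFactor.tendsto_mul_integral_remainder p).const_mul ((p : ℝ) ^ 2 / 2))
end
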